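/- For all propositional atoms p and all modal formulas φ in which p does not occur, the translation τ_p(φ) is valid in the class of all Kripke frames if and only if φ is valid in the class of all Kripke frames. (Direction ⇐: from a countermodel M=(W,R,V) of τ_p(φ), the model M' with the same worlds, relation R' = {(t,u) : tRu and u ∈ V(p)}, and the same valuation is a countermodel of φ, via the key invariant: for all formulas ψ not containing p and all worlds t, M,t ⊨ τ_p(ψ) iff M',t ⊨ ψ.) -/
import Mathlib


inductive Formula where
  | atom : ℕ → Formula
  | bot : Formula
  | neg : Formula → Formula
  | and : Formula → Formula → Formula
  | box : Formula → Formula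
deriving DecidableEq

/-- Material implication `φ → ψ` as the abbreviation `¬(φ ∧ ¬ψ)`. -/
def Formula.impl (φ ψ : Formula) : Formula := .neg (.and φ (.neg ψ))

/-- Kripke truth: `truth R V w φ` means `(W,R,V), w ⊨ φ`. -/
def truth {W : Type*} (R : W → W → Prop) (V : ℕ → W → Prop) : W → Formula → Prop
  | w, .atom a => V a w
  | _, .bot => False
  | w, .neg φ => ¬ truth R V w φ
  | w, .and φ ψ => truth R V w φ ∧ truth R V w ψ
  | w, .box φ => ∀ w', R w w' → truth R V w' φ

/-- The relativization translation `τ_p`. -/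
def tau (p : ℕ) : Formula → Formula
  | .atom q => .atom q
  | .bot => .bot
  | .neg φ => .neg (tau p φ)
  | .and φ ψ => .and (tau p φ) (tau p ψ)
  | .box φ => .box ((Formula.atom p).impl (tau p φ))

/-- `occurs p φ`: the atom `p` occurs in `φ`. -/
def occurs (p : ℕ) : Formula → Prop
  | .atom q => q = p
  | .bot => False
  | .neg φ => occurs p φ
  | .and φ ψ => occurs p φ ∨ occurs p ψ
  | .box φ => occurs p φ

lemma truth_congr {W : Type*} (R : W → W → Prop) (V V' : ℕ → W → Prop)
    (φ : Formula) (h : ∀ a, occurs a φ → ∀ w, V a w ↔ V' a w) :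
    ∀ w, truth R V w φ ↔ truth R V' w φ := by
  induction φ with
  | atom a => exact fun w => h a rfl w
  | bot => simp [truth]
  | neg ψ ih =>
      intro w
      simp only [truth]
      exact not_congr (ih (fun a ha => h a ha) w)
  | and ψ χ ih1 ih2 =>
      intro w
      simp only [truth]
      exact and_congr (ih1 (fun a ha => h a (Or.inl ha)) w)
        (ih2 (fun a ha => h a (Or.inr ha)) w)
  | box ψ ih =>
      intro w
      simp only [truth]
      exact forall_congr' fun w' => imp_congr Iff.rfl (ih (fun a ha => h a ha) w')

lemma tau_key {W : Type*} (R : W → W → Prop) (V : ℕ → W → Prop) (p : ℕ)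
    (φ : Formula) (hp : ¬ occurs p φ) :
    ∀ w, truth R V w (tau p φ) ↔ truth (fun t u => R t u ∧ V p u) V w φ := by
  induction φ with
  | atom a => intro w; rfl
  | bot => intro w; rfl
  | neg ψ ih =>
      intro w
      simp only [tau, truth]
      exact not_congr (ih hp w)
  | and ψ χ ih1 ih2 =>
      intro w
      simp only [tau, truth]
      exact and_congr (ih1 (fun h => hp (Or.inl h)) w) (ih2 (fun h => hp (Or.inr h)) w)
  | box ψ ih =>
      intro w
      simp only [tau, truth, Formula.impl]
      constructor
      · intro h w' ⟨hr, hv⟩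
        have := h w' hr
        rw [not_and_not_right] at this
        exact (ih hp w').mp (this hv)
      · intro h w' hr
        rw [not_and_not_right]
        intro hv
        exact (ih hp w').mpr (h w' ⟨hr, hv⟩)

/-- for `p` not occurring in `φ`, `τ_p(φ)` is valid in the class of
all Kripke frames iff `φ` is. -/
theorem tau_valid_iff (p : ℕ) (φ : Formula) (hp : ¬ occurs p φ) :
    (∀ (W : Type) (R : W → W → Prop) (V : ℕ → W → Prop) (w : W),
        truth R V w (tau p φ)) ↔
      (∀ (W : Type) (R : W → W → Prop) (V : ℕ → W → Prop) (w : W),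
        truth R V w φ) := by
  constructor
  · intro h W R V w
    set V' : ℕ → W → Prop := fun a u => if a = p then True else V a u with hV'
    have h1 := (tau_key R V' p φ hp w).mp (h W R V' w)
    have h2 : truth (fun t u => R t u ∧ V' p u) V' w φ ↔ truth R V' w φ := by
      have : (fun t u => R t u ∧ V' p u) = R := by
        funext t u; simp [hV']
      rw [this]
    have h3 := truth_congr R V' V φ (fun a ha u => by
      simp only [hV']
      rw [if_neg]
      intro hpa; exact hp (hpa ▸ ha)) w
    exact h3.mp (h2.mp h1)
  · intro h W R V w
    exact (tau_key R V p φ hp w).mpr (h W _ V w)
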